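/- Let K ⊆ E be a regular closed convex cone and L ⊆ E a linear subspace. For v ∈ K\{0} define λ_v(x) := sup{t : x − tv ∈ K}. Then the sigma measure σ(L) := min_{v ∈ K, ‖v‖=1} max_{x ∈ L, ‖x‖ ≤ 1} λ_v(x) satisfies σ(L) = min{‖u−y‖* : v ∈ K, y ∈ L^⊥, u ∈ K*, ‖v‖ = 1, ⟨u,v⟩ = 1}. -/

import Mathlib

open RealInnerProductSpace

/-- A (possibly non-Euclidean) norm, given as a function. -/
def IsNorm {E : Type*} [NormedAddCommGroup E] [InnerProductSpace ℝ E] (N : E → ℝ) : Prop :=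
  (∀ x, 0 ≤ N x) ∧ (∀ x, N x = 0 ↔ x = 0) ∧
    (∀ (c : ℝ) (x : E), N (c • x) = |c| * N x) ∧ (∀ x y, N (x + y) ≤ N x + N y)

/-- The dual norm `‖u‖* = max_{N x = 1} ⟪u,x⟫`. -/
noncomputable def dualNorm {E : Type*} [NormedAddCommGroup E] [InnerProductSpace ℝ E]
    (N : E → ℝ) (u : E) : ℝ :=
  sSup {r | ∃ x, N x = 1 ∧ r = ⟪u, x⟫}

/-- The dual cone `K* = {u : ⟪u,x⟫ ≥ 0 for all x ∈ K}`. -/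
def dualCone {E : Type*} [NormedAddCommGroup E] [InnerProductSpace ℝ E] (K : Set E) :
    Set E := {u | ∀ x ∈ K, 0 ≤ ⟪u, x⟫}

/-- `λᵥ(x) = sup {t : x − tv ∈ K}`. -/
noncomputable def lambdaDir {E : Type*} [NormedAddCommGroup E] [InnerProductSpace ℝ E]
    (K : Set E) (v : E) (x : E) : ℝ :=
  sSup {t | x - t • v ∈ K}

/-- The sigma measure `σ(L) = min_{v ∈ K, ‖v‖=1} max_{x ∈ L, ‖x‖≤1} λᵥ(x)`. -/
noncomputable def sigmaMeasure {E : Type*} [NormedAddCommGroup E] [InnerProductSpace ℝ E]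
    (N : E → ℝ) (K : Set E) (L : Submodule ℝ E) : ℝ :=
  sInf {r | ∃ v ∈ K, N v = 1 ∧ r = sSup {t | ∃ x ∈ L, N x ≤ 1 ∧ t = lambdaDir K v x}}

/-!
Weak duality: if `u ∈ K*`, `⟪u, v⟫ = 1` and `y ∈ L^⊥`, then `x - t v ∈ K` forces
`t ≤ ⟪u, x⟫ = ⟪u - y, x⟫ ≤ ‖u - y‖*` on the unit ball of `L`. Conversely, for a fixed unit `v ∈ K`
let `s` be the inner maximum. The convex set `{x - t v : x ∈ L, ‖x‖ ≤ 1, t > s}` misses `K`; a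
separating functional normalised at `v` lies in `K*` and is bounded by `s ‖·‖` on `L`, and a
Hahn–Banach extension of its restriction to `L` differs from it by some `y ∈ L^⊥` and has dual
norm at most `s`.
-/

open Set

namespace IsNorm

variable {E : Type*} [NormedAddCommGroup E] [InnerProductSpace ℝ E] {N : E → ℝ}

lemma nonneg (hN : IsNorm N) (x : E) : 0 ≤ N x := hN.1 x

lemma map_zero (hN : IsNorm N) : N 0 = 0 := (hN.2.1 0).2 rfl

lemma pos (hN : IsNorm N) {x : E} (hx : x ≠ 0) : 0 < N x :=
  (hN.nonneg x).lt_of_ne fun h => hx ((hN.2.1 x).1 h.symm)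

lemma ne_zero_of_eq_one (hN : IsNorm N) {x : E} (hx : N x = 1) : x ≠ 0 := by
  rintro rfl
  simp [hN.map_zero] at hx

lemma map_neg (hN : IsNorm N) (x : E) : N (-x) = N x := by
  simpa using hN.2.2.1 (-1) x

lemma map_smul_of_nonneg (hN : IsNorm N) {c : ℝ} (hc : 0 ≤ c) (x : E) : N (c • x) = c * N x := by
  rw [hN.2.2.1, abs_of_nonneg hc]

lemma map_inv_smul_self (hN : IsNorm N) {x : E} (hx : x ≠ 0) : N ((N x)⁻¹ • x) = 1 := by
  rw [hN.map_smul_of_nonneg (inv_nonneg.2 (hN.nonneg x)), inv_mul_cancel₀ (hN.pos hx).ne']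

lemma convexOn (hN : IsNorm N) : ConvexOn ℝ univ N :=
  ⟨convex_univ, fun x _ y _ a b ha hb _ => by
    simpa only [hN.map_smul_of_nonneg ha, hN.map_smul_of_nonneg hb, smul_eq_mul] using
      hN.2.2.2 (a • x) (b • y)⟩

lemma apply_le_mul_of_forall_eq_one (hN : IsNorm N) (f : E →ₗ[ℝ] ℝ) {L : Submodule ℝ E} {s : ℝ}
    (h : ∀ x ∈ L, N x = 1 → f x ≤ s) {x : E} (hx : x ∈ L) : f x ≤ s * N x := by
  rcases eq_or_ne x 0 with rfl | hx0
  · simp [hN.map_zero]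
  have := h _ (L.smul_mem _ hx) (hN.map_inv_smul_self hx0)
  rwa [map_smul, smul_eq_mul, inv_mul_le_iff₀ (hN.pos hx0), mul_comm] at this

variable [FiniteDimensional ℝ E]

lemma continuous (hN : IsNorm N) : Continuous N :=
  continuousOn_univ.1 (hN.convexOn.continuousOn isOpen_univ)

lemma exists_norm_le_mul (hN : IsNorm N) : ∃ C, 0 ≤ C ∧ ∀ x, ‖x‖ ≤ C * N x := by
  obtain ⟨C, hC⟩ := (isCompact_sphere (0 : E) 1).exists_bound_of_continuousOn
    (hN.continuous.continuousOn.inv₀ fun x hx => (hN.pos (ne_zero_of_mem_unit_sphere ⟨x, hx⟩)).ne')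
  refine ⟨max C 0, le_max_right _ _, fun x => ?_⟩
  rcases eq_or_ne x 0 with rfl | hx
  · simp [hN.map_zero]
  have := hC (‖x‖⁻¹ • x) (by simp [norm_smul, hx])
  rw [Pi.inv_apply, hN.map_smul_of_nonneg (by positivity), Real.norm_eq_abs,
    abs_of_nonneg (by have := hN.nonneg x; positivity), mul_inv, inv_inv,
    mul_inv_le_iff₀ (hN.pos hx)] at this
  exact this.trans (mul_le_mul_of_nonneg_right (le_max_left _ _) (hN.nonneg x))

end IsNorm

section DualNorm

variable {E : Type*} [NormedAddCommGroup E] [InnerProductSpace ℝ E] {N : E → ℝ}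

lemma dualNorm_nonneg (hN : IsNorm N) (w : E) : 0 ≤ dualNorm N w := by
  by_cases h : ∃ x, N x = 1
  · obtain ⟨x, hx⟩ := h
    rcases le_total 0 ⟪w, x⟫ with hwx | hwx
    · exact Real.sSup_nonneg' ⟨_, ⟨x, hx, rfl⟩, hwx⟩
    · refine Real.sSup_nonneg' ⟨_, ⟨-x, by rw [hN.map_neg, hx], rfl⟩, ?_⟩
      rw [inner_neg_right]
      linarith
  · simp only [not_exists] at h
    simp [dualNorm, h]

lemma dualNorm_le {w : E} {s : ℝ} (hs : 0 ≤ s) (h : ∀ x, ⟪w, x⟫ ≤ s * N x) :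
    dualNorm N w ≤ s :=
  Real.sSup_le (by rintro _ ⟨x, hx, rfl⟩; simpa [hx] using h x) hs

variable [FiniteDimensional ℝ E]

lemma inner_le_dualNorm_mul (hN : IsNorm N) (w x : E) : ⟪w, x⟫ ≤ dualNorm N w * N x := by
  obtain ⟨C, hC, hCN⟩ := hN.exists_norm_le_mul
  have hbdd : BddAbove {r | ∃ x, N x = 1 ∧ r = ⟪w, x⟫} := by
    refine ⟨‖w‖ * C, ?_⟩
    rintro _ ⟨x, hx, rfl⟩
    calc ⟪w, x⟫ ≤ ‖w‖ * ‖x‖ := real_inner_le_norm w x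
      _ ≤ ‖w‖ * C := by simpa [hx] using mul_le_mul_of_nonneg_left (hCN x) (norm_nonneg w)
  exact hN.apply_le_mul_of_forall_eq_one (innerₛₗ ℝ w) (L := ⊤)
    (fun x _ hx => le_csSup hbdd ⟨x, hx, rfl⟩) Submodule.mem_top

lemma exists_mem_orthogonal_dualNorm_sub_le (hN : IsNorm N) {L : Submodule ℝ E} {u : E} {s : ℝ}
    (hs : 0 ≤ s) (h : ∀ x ∈ L, ⟪u, x⟫ ≤ s * N x) : ∃ y ∈ Lᗮ, dualNorm N (u - y) ≤ s := by
  obtain ⟨g, hgL, hg⟩ := exists_extension_of_le_sublinear ((innerₛₗ ℝ u).toPMap L)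
    (fun x => s * N x) (fun c hc x => by simp only [hN.map_smul_of_nonneg hc.le]; ring)
    (fun x y => by simpa only [mul_add] using mul_le_mul_of_nonneg_left (hN.2.2.2 x y) hs)
    (fun x => h x x.2)
  set w := (InnerProductSpace.toDual ℝ E).symm (LinearMap.toContinuousLinearMap g)
  have hw : ∀ x, ⟪w, x⟫ = g x := fun x => InnerProductSpace.toDual_symm_apply
  refine ⟨u - w, (Submodule.mem_orthogonal' L _).2 fun x hx => ?_, ?_⟩
  · rw [inner_sub_left, hw, hgL ⟨x, hx⟩]
    simp
  · rw [sub_sub_cancel]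
    exact dualNorm_le hs fun x => (hw x).trans_le (hg x)

end DualNorm

section Cone

variable {E : Type*} [NormedAddCommGroup E] [InnerProductSpace ℝ E]

lemma exists_properCone_coe_eq {K : Set E} (hKclosed : IsClosed K) (hKconv : Convex ℝ K)
    (hKcone : ∀ ⦃c : ℝ⦄, 0 ≤ c → ∀ ⦃x⦄, x ∈ K → c • x ∈ K) (hK : K.Nonempty) :
    ∃ C : ProperCone ℝ E, (C : Set E) = K := by
  refine ⟨{ carrier := K
            add_mem' := fun {x y} hx hy => ?_
            zero_mem' := ?_
            smul_mem' := fun c x hx => hKcone c.2 hx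
            isClosed' := hKclosed }, rfl⟩
  · have := hKcone zero_le_two (hKconv hx hy one_half_pos.le one_half_pos.le (add_halves 1))
    rwa [smul_add, smul_smul, smul_smul, mul_one_div_cancel two_ne_zero, one_smul, one_smul] at this
  · obtain ⟨x, hx⟩ := hK
    simpa using hKcone le_rfl hx

lemma le_inner_of_sub_smul_mem {K : Set E} {u v x : E} {t : ℝ} (hu : u ∈ dualCone K)
    (huv : ⟪u, v⟫ = 1) (h : x - t • v ∈ K) : t ≤ ⟪u, x⟫ := by
  have := hu _ h
  rw [inner_sub_right, real_inner_smul_right, huv, mul_one] at this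
  linarith

lemma exists_mem_dualCone_inner_eq_one [CompleteSpace E] (K : ProperCone ℝ E)
    (hK : ∀ x ∈ K, -x ∈ K → x = 0) {v : E} (hv : v ∈ K) (hv0 : v ≠ 0) :
    ∃ u ∈ dualCone K, ⟪u, v⟫ = 1 := by
  obtain ⟨y, hyK, hyv⟩ := K.hyperplane_separation' (x₀ := -v) fun h => hv0 (hK v hv h)
  rw [inner_neg_left, neg_neg_iff_pos, real_inner_comm] at hyv
  refine ⟨⟪y, v⟫⁻¹ • y, fun x hx => ?_, ?_⟩
  · rw [real_inner_smul_left, real_inner_comm x y]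
    exact mul_nonneg (inv_nonneg.2 hyv.le) (hyK x hx)
  · rw [real_inner_smul_left, inv_mul_cancel₀ hyv.ne']

lemma apply_le_of_forall_mem_interior_lt {S : Set E} (hSconv : Convex ℝ S) (hSclosed : IsClosed S)
    (hS : (interior S).Nonempty) {f : E →L[ℝ] ℝ} {α : ℝ} (h : ∀ x ∈ interior S, f x < α) :
    ∀ x ∈ S, f x ≤ α := by
  rw [← hSclosed.closure_eq, ← hSconv.closure_interior_eq_closure_of_nonempty_interior hS]
  exact fun x hx => closure_minimal (fun y hy => (h y hy).le)
    (isClosed_le f.continuous continuous_const) hx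

lemma ProperCone.apply_nonpos_of_forall_le (K : ProperCone ℝ E) {f : E →ₗ[ℝ] ℝ} {α : ℝ}
    (h : ∀ x ∈ K, f x ≤ α) : ∀ x ∈ K, f x ≤ 0 := by
  intro x hx
  by_contra! hfx
  have := h _ (K.smul_mem hx (by positivity : 0 ≤ (|α| + 1) / f x))
  rw [map_smul, smul_eq_mul, div_mul_cancel₀ _ hfx.ne'] at this
  linarith [le_abs_self α]

end Cone

section Duality

variable {E : Type*} [NormedAddCommGroup E] [InnerProductSpace ℝ E] [FiniteDimensional ℝ E]
  {N : E → ℝ} {L : Submodule ℝ E} {v : E}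

lemma bddAbove_lambdaDir (hN : IsNorm N) {K : Set E} {u : E} (hu : u ∈ dualCone K)
    (huv : ⟪u, v⟫ = 1) : BddAbove {t | ∃ x ∈ L, N x ≤ 1 ∧ t = lambdaDir K v x} := by
  obtain ⟨C, hC, hCN⟩ := hN.exists_norm_le_mul
  refine ⟨‖u‖ * C, ?_⟩
  rintro _ ⟨x, -, hxN, rfl⟩
  refine Real.sSup_le (fun t ht => ?_) (by positivity)
  calc t ≤ ⟪u, x⟫ := le_inner_of_sub_smul_mem hu huv ht
    _ ≤ ‖u‖ * ‖x‖ := real_inner_le_norm u x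
    _ ≤ ‖u‖ * C := mul_le_mul_of_nonneg_left ((hCN x).trans (mul_le_of_le_one_right hC hxN))
        (norm_nonneg u)

lemma sSup_lambdaDir_le_dualNorm (hN : IsNorm N) {K : Set E} {u y : E} (hu : u ∈ dualCone K)
    (huv : ⟪u, v⟫ = 1) (hy : y ∈ Lᗮ) :
    sSup {t | ∃ x ∈ L, N x ≤ 1 ∧ t = lambdaDir K v x} ≤ dualNorm N (u - y) := by
  have hd := dualNorm_nonneg hN (u - y)
  refine Real.sSup_le ?_ hd
  rintro _ ⟨x, hxL, hxN, rfl⟩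
  refine Real.sSup_le (fun t ht => ?_) hd
  calc t ≤ ⟪u, x⟫ := le_inner_of_sub_smul_mem hu huv ht
    _ = ⟪u - y, x⟫ := by rw [inner_sub_left, (Submodule.mem_orthogonal' L y).1 hy x hxL, sub_zero]
    _ ≤ dualNorm N (u - y) * N x := inner_le_dualNorm_mul hN _ _
    _ ≤ dualNorm N (u - y) := mul_le_of_le_one_right hd hxN

lemma exists_mem_dualCone_inner_le (hN : IsNorm N) (K : ProperCone ℝ E)
    (hL : (↑L ∩ interior (K : Set E)).Nonempty) (hv : v ∈ K) {s : ℝ}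
    (h : ∀ x ∈ L, N x ≤ 1 → ∀ t, x - t • v ∈ K → t ≤ s) :
    ∃ u ∈ dualCone K, ⟪u, v⟫ = 1 ∧ ∀ x ∈ L, N x ≤ 1 → ⟪u, x⟫ ≤ s := by
  let π : E × ℝ →ₗ[ℝ] E :=
    LinearMap.fst ℝ E ℝ - (LinearMap.toSpanSingleton ℝ E v).comp (LinearMap.snd ℝ E ℝ)
  have hconv : Convex ℝ (π '' ((↑L ∩ {x | N x ≤ 1}) ×ˢ Ioi s)) := by
    refine ((L.convex.inter ?_).prod (convex_Ioi s)).linear_image π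
    simpa using hN.convexOn.convex_le 1
  have hdisj : Disjoint (interior (K : Set E)) (π '' ((↑L ∩ {x | N x ≤ 1}) ×ˢ Ioi s)) := by
    refine disjoint_left.2 ?_
    rintro _ hK ⟨⟨x, t⟩, ⟨⟨hxL, hxN⟩, hst⟩, rfl⟩
    exact (h x hxL hxN t (by simpa [π] using interior_subset hK)).not_gt hst
  obtain ⟨f, α, hfK, hfA⟩ :=
    geometric_hahn_banach_open K.convex.interior isOpen_interior hconv hdisj
  have hα : ∀ x ∈ K, f x ≤ α :=
    apply_le_of_forall_mem_interior_lt K.convex K.isClosed (hL.mono inter_subset_right) hfK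
  have hα0 : 0 ≤ α := by simpa using hα 0 K.zero_mem
  have hf0 : ∀ x ∈ K, f x ≤ 0 := K.apply_nonpos_of_forall_le (f := f) hα
  have hA : ∀ x ∈ L, N x ≤ 1 → ∀ t, s < t → α ≤ f x - t * f v := fun x hxL hxN t ht => by
    simpa [π] using hfA _ ⟨(x, t), ⟨⟨hxL, hxN⟩, ht⟩, rfl⟩
  -- a point of `L ∩ interior K`, scaled into the unit ball, rules out `f v = 0`
  have hfv : f v < 0 := by
    obtain ⟨x₀, hx₀L, hx₀⟩ := hL
    have hr : 0 < (N x₀ + 1)⁻¹ := by have := hN.nonneg x₀; positivity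
    have hrN : N ((N x₀ + 1)⁻¹ • x₀) ≤ 1 := by
      rw [hN.map_smul_of_nonneg hr.le, inv_mul_le_one₀ (by linarith [hN.nonneg x₀])]
      linarith
    by_contra! hv0
    have hA₀ := hA _ (L.smul_mem _ hx₀L) hrN (s + 1) (lt_add_one s)
    rw [map_smul, smul_eq_mul, le_antisymm (hf0 v hv) hv0, mul_zero, sub_zero] at hA₀
    have hfx₀ : f x₀ < α := hfK x₀ hx₀
    have hrx₀ := mul_nonpos_of_nonneg_of_nonpos hr.le (hf0 x₀ (interior_subset hx₀))
    linarith [mul_neg_of_pos_of_neg hr (show f x₀ < 0 by linarith)]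
  set w := (InnerProductSpace.toDual ℝ E).symm f
  have hw : ∀ x, ⟪(f v)⁻¹ • w, x⟫ = f x / f v := fun x => by
    rw [real_inner_smul_left, InnerProductSpace.toDual_symm_apply, inv_mul_eq_div]
  refine ⟨(f v)⁻¹ • w, fun x hx => ?_, by rw [hw, div_self hfv.ne], fun x hxL hxN => ?_⟩
  · rw [hw]
    exact div_nonneg_of_nonpos (hf0 x hx) hfv.le
  · refine le_of_forall_gt_imp_ge_of_dense fun t ht => ?_
    rw [hw, div_le_iff_of_neg hfv]
    linarith [hA x hxL hxN t ht]

lemma exists_dualNorm_sub_le_sSup_lambdaDir (hN : IsNorm N) (K : ProperCone ℝ E)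
    (hK : ∀ x ∈ K, -x ∈ K → x = 0) (hL : (↑L ∩ interior (K : Set E)).Nonempty) (hv : v ∈ K)
    (hv0 : v ≠ 0) :
    ∃ u y, y ∈ Lᗮ ∧ u ∈ dualCone K ∧ ⟪u, v⟫ = 1 ∧
      dualNorm N (u - y) ≤ sSup {t | ∃ x ∈ L, N x ≤ 1 ∧ t = lambdaDir K v x} := by
  obtain ⟨u₀, hu₀, hu₀v⟩ := exists_mem_dualCone_inner_eq_one K hK hv hv0
  have hlam : ∀ x ∈ L, N x ≤ 1 → ∀ t, x - t • v ∈ K →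
      t ≤ sSup {t | ∃ x ∈ L, N x ≤ 1 ∧ t = lambdaDir K v x} := fun x hxL hxN t ht =>
    (le_csSup ⟨_, fun _ => le_inner_of_sub_smul_mem hu₀ hu₀v⟩ ht).trans
      (le_csSup (bddAbove_lambdaDir hN hu₀ hu₀v) ⟨x, hxL, hxN, rfl⟩)
  have hs := hlam 0 L.zero_mem (by simp [hN.map_zero]) 0 (by simp)
  obtain ⟨u, hu, huv, huL⟩ := exists_mem_dualCone_inner_le hN K hL hv hlam
  obtain ⟨y, hy, hdy⟩ := exists_mem_orthogonal_dualNorm_sub_le hN hs fun x hx =>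
    hN.apply_le_mul_of_forall_eq_one (innerₛₗ ℝ u) (fun x hxL hxN => huL x hxL hxN.le) hx
  exact ⟨u, y, hy, hu, huv, hdy⟩

end Duality

theorem sigma_eq_min_dist_general {E : Type*} [NormedAddCommGroup E]
    [InnerProductSpace ℝ E] [FiniteDimensional ℝ E]
    (N : E → ℝ) (hN : IsNorm N) (K : Set E)
    (hKclosed : IsClosed K) (hKconv : Convex ℝ K)
    (hKcone : ∀ ⦃c : ℝ⦄, 0 ≤ c → ∀ ⦃x⦄, x ∈ K → c • x ∈ K)
    (hKpointed : ∀ x ∈ K, -x ∈ K → x = 0)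
    (L : Submodule ℝ E) (hL : (↑L ∩ interior K).Nonempty) :
    sigmaMeasure N K L =
      sInf {r | ∃ v y u, v ∈ K ∧ y ∈ Lᗮ ∧ u ∈ dualCone K ∧ N v = 1 ∧ ⟪u, v⟫ = 1 ∧
        r = dualNorm N (u - y)} := by
  obtain ⟨C, rfl⟩ := exists_properCone_coe_eq hKclosed hKconv hKcone
    (hL.mono (inter_subset_right.trans interior_subset))
  refine csInf_eq_csInf_of_forall_exists_le ?_ ?_
  · rintro _ ⟨v, hv, hNv, rfl⟩
    obtain ⟨u, y, hy, hu, huv, hle⟩ :=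
      exists_dualNorm_sub_le_sSup_lambdaDir hN C hKpointed hL hv (hN.ne_zero_of_eq_one hNv)
    exact ⟨_, ⟨v, y, u, hv, hy, hu, hNv, huv, rfl⟩, hle⟩
  · rintro _ ⟨v, y, u, hv, hy, hu, hNv, huv, rfl⟩
    exact ⟨_, ⟨v, hv, hNv, rfl⟩, sSup_lambdaDir_le_dualNorm hN hu huv hy⟩

/-- Characterization of the sigma measure:
`σ(L) = min {‖u−y‖* : v ∈ K, y ∈ L^⊥, u ∈ K*, ‖v‖ = 1, ⟪u,v⟫ = 1}`. -/
theorem sigma_eq_min_dist {E : Type*} [NormedAddCommGroup E]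
    [InnerProductSpace ℝ E] [FiniteDimensional ℝ E]
    (N : E → ℝ) (hN : IsNorm N) (K : Set E)
    (hKclosed : IsClosed K) (hKconv : Convex ℝ K)
    (hKcone : ∀ ⦃c : ℝ⦄, 0 ≤ c → ∀ ⦃x⦄, x ∈ K → c • x ∈ K)
    (hKint : (interior K).Nonempty) (hKpointed : ∀ x ∈ K, -x ∈ K → x = 0)
    (L : Submodule ℝ E) (hL : (↑L ∩ interior K).Nonempty) :
    sigmaMeasure N K L =
      sInf {r | ∃ v y u, v ∈ K ∧ y ∈ Lᗮ ∧ u ∈ dualCone K ∧ N v = 1 ∧ ⟪u, v⟫ = 1 ∧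
        r = dualNorm N (u - y)} :=
  sigma_eq_min_dist_general N hN K hKclosed hKconv hKcone hKpointed L hL
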